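/- arXiv:2404.00547 — 2 statements merged into one kernel-verified Lean document; each statement's English description precedes it below -/
import Mathlib

section
/- For any real number x ≥ 2 and any positive integer n, the function g_{n+1}(x) := 1 - F(x)^{n+1} - (1-F(x))^{n+1}, where F is the standard normal CDF, satisfies g_{n+1}(x) ≤ ((n+1)/√(2π)) · exp(-x). -/
open MeasureTheory Real Set

/-- The cumulative distribution function of the standard normal distribution. -/
noncomputable def stdNormalCDF (x : ℝ) : ℝ :=
  (Real.sqrt (2 * Real.pi))⁻¹ * ∫ t in Set.Iic x, Real.exp (-t ^ 2 / 2)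

/-! On `[0, 1]`, Bernoulli's inequality `p ^ m ≥ 1 - m (1 - p)` together with `(1 - p) ^ m ≥ 0`
bounds `g_m(p) = 1 - p ^ m - (1 - p) ^ m` by `m (1 - p)`; so it suffices to bound the upper tail
`1 - F x` by `exp (-x) / √(2π)`, which holds because `t ^ 2 / 2 ≥ t` for `t ≥ 2`. -/

lemma one_sub_pow_sub_one_sub_pow_le {p : ℝ} (hp₀ : 0 ≤ p) (hp₁ : p ≤ 1) (m : ℕ) :
    1 - p ^ m - (1 - p) ^ m ≤ m * (1 - p) := by
  have bernoulli : 1 + m * (p - 1) ≤ p ^ m := by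
    simpa using one_add_mul_le_pow (a := p - 1) (by linarith) m
  have : 0 ≤ (1 - p) ^ m := pow_nonneg (by linarith) m
  linarith

lemma integrable_exp_neg_sq_div_two : Integrable fun t : ℝ => exp (-t ^ 2 / 2) := by
  convert integrable_exp_neg_mul_sq (one_half_pos (α := ℝ)) using 2 with t
  ring_nf

lemma integral_exp_neg_sq_div_two : ∫ t : ℝ, exp (-t ^ 2 / 2) = √(2 * π) := by
  have h : (fun t : ℝ => exp (-t ^ 2 / 2)) = fun t => exp (-(1 / 2) * t ^ 2) := by
    ext t; ring_nf
  rw [h, integral_gaussian]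
  norm_num [mul_comm]

lemma one_sub_stdNormalCDF (x : ℝ) :
    1 - stdNormalCDF x = (√(2 * π))⁻¹ * ∫ t in Ioi x, exp (-t ^ 2 / 2) := by
  have hsplit := intervalIntegral.integral_Iic_add_Ioi
    (integrable_exp_neg_sq_div_two.integrableOn (s := Iic x))
    integrable_exp_neg_sq_div_two.integrableOn
  rw [integral_exp_neg_sq_div_two] at hsplit
  have hsqrt : √(2 * π) ≠ 0 := (sqrt_pos.2 (by positivity)).ne'
  rw [stdNormalCDF, ← inv_mul_cancel₀ hsqrt, ← hsplit]
  ring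

lemma stdNormalCDF_nonneg (x : ℝ) : 0 ≤ stdNormalCDF x :=
  mul_nonneg (inv_nonneg.2 (sqrt_nonneg _)) (integral_nonneg fun _ => (exp_pos _).le)

lemma stdNormalCDF_le_one (x : ℝ) : stdNormalCDF x ≤ 1 := by
  have : 0 ≤ 1 - stdNormalCDF x := by
    rw [one_sub_stdNormalCDF]
    exact mul_nonneg (inv_nonneg.2 (sqrt_nonneg _)) (integral_nonneg fun _ => (exp_pos _).le)
  linarith

lemma one_sub_stdNormalCDF_le {x : ℝ} (hx : 2 ≤ x) :
    1 - stdNormalCDF x ≤ (√(2 * π))⁻¹ * exp (-x) := by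
  rw [one_sub_stdNormalCDF, ← integral_exp_neg_Ioi x]
  refine mul_le_mul_of_nonneg_left ?_ (inv_nonneg.2 (sqrt_nonneg _))
  refine setIntegral_mono_on integrable_exp_neg_sq_div_two.integrableOn
    ((exp_neg_integrableOn_Ioi x one_pos).congr_fun (fun t _ => by simp) measurableSet_Ioi)
    measurableSet_Ioi fun t ht => exp_le_exp.2 ?_
  nlinarith [mem_Ioi.1 ht]

theorem tail_bound_general (n : ℕ) (x : ℝ) (hx : 2 ≤ x) :
    1 - (stdNormalCDF x) ^ (n + 1) - (1 - stdNormalCDF x) ^ (n + 1) ≤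
      ((n + 1 : ℝ) / Real.sqrt (2 * Real.pi)) * Real.exp (-x) :=
  calc 1 - (stdNormalCDF x) ^ (n + 1) - (1 - stdNormalCDF x) ^ (n + 1)
      ≤ (n + 1 : ℝ) * (1 - stdNormalCDF x) := by
        exact_mod_cast one_sub_pow_sub_one_sub_pow_le (stdNormalCDF_nonneg x)
          (stdNormalCDF_le_one x) (n + 1)
    _ ≤ (n + 1 : ℝ) * ((√(2 * π))⁻¹ * exp (-x)) := by gcongr; exact one_sub_stdNormalCDF_le hx
    _ = ((n + 1 : ℝ) / √(2 * π)) * exp (-x) := by ring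

theorem tail_bound (n : ℕ) (hn : 0 < n) (x : ℝ) (hx : 2 ≤ x) :
    1 - (stdNormalCDF x) ^ (n + 1) - (1 - stdNormalCDF x) ^ (n + 1) ≤
      ((n + 1 : ℝ) / Real.sqrt (2 * Real.pi)) * Real.exp (-x) :=
  tail_bound_general n x hx
end

section
/- For all real x with 0 < x < 1/n (n ≥ 3 an integer), the function f_n(x) = (1+x)^n·(1 - n·ln x) is positive, and taking x = 1/(n ln n) yields f_n(1/(n ln n)) ≤ e^{1/ln n}·(1 + n ln n + n ln ln n); in particular min_{x ∈ (0,1/n)} f_n(x) ≤ n(ln n + ln ln n + 5) for n ≥ 3. -/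
open Real

lemma exp_le_one_add_two_mul {t : ℝ} (h0 : 0 ≤ t) (h1 : t ≤ 1) :
    Real.exp t ≤ 1 + 2 * t := by
  have hc := convexOn_exp.2 (Set.mem_univ (0:ℝ)) (Set.mem_univ (1:ℝ))
    (show (0:ℝ) ≤ 1 - t by linarith) h0 (by ring)
  simp only [smul_eq_mul, mul_zero, mul_one, zero_add, Real.exp_zero] at hc
  have he : Real.exp 1 < 2.7182818286 := Real.exp_one_lt_d9
  nlinarith

lemma key (n : ℕ) (hn : 3 ≤ n) :
    Real.exp (1 / Real.log n) * (1 + n * Real.log n + n * Real.log (Real.log n)) ≤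
      n * (Real.log n + Real.log (Real.log n) + 5) := by
  set L := Real.log n with hLdef
  have hn3 : (3:ℝ) ≤ n := by exact_mod_cast hn
  have hL1 : 1 < L := by
    have h1 : Real.log 3 ≤ L := Real.log_le_log (by norm_num) hn3
    have h3 : 1 < Real.log 3 := by
      rw [show (1:ℝ) = Real.log (Real.exp 1) by simp]
      exact Real.log_lt_log (Real.exp_pos 1) (by nlinarith [Real.exp_one_lt_d9])
    linarith
  have hL0 : (0:ℝ) < L := by linarith
  set M := Real.log L with hMdef
  have hM0 : 0 < M := Real.log_pos hL1
  have hML : M ≤ L - 1 := Real.log_le_sub_one_of_pos hL0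
  have hE : Real.exp (1 / L) ≤ 1 + 2 * (1 / L) :=
    exp_le_one_add_two_mul (by positivity) (by rw [div_le_one hL0]; linarith)
  have hEL : Real.exp (1 / L) * L ≤ L + 2 := by
    calc Real.exp (1/L) * L ≤ (1 + 2*(1/L)) * L :=
          mul_le_mul_of_nonneg_right hE hL0.le
      _ = L + 2 := by field_simp
  have hE0 : (0:ℝ) < Real.exp (1 / L) := Real.exp_pos _
  have hpos : (0:ℝ) ≤ 1 + n*L + n*M := by positivity
  nlinarith [mul_le_mul_of_nonneg_right hEL hpos,
    mul_le_mul_of_nonneg_left hML (show (0:ℝ) ≤ n by linarith),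
    mul_nonneg (show (0:ℝ) ≤ (n:ℝ) - 3 by linarith) hL0.le, hL0, hM0]

theorem rogers_function_bounds (n : ℕ) (hn : 3 ≤ n) :
    (∀ x : ℝ, 0 < x → x < 1 / n → 0 < (1 + x) ^ n * (1 - n * Real.log x)) ∧
    (1 + 1 / (n * Real.log n)) ^ n * (1 - n * Real.log (1 / (n * Real.log n))) ≤
      Real.exp (1 / Real.log n) * (1 + n * Real.log n + n * Real.log (Real.log n)) ∧
    ∃ x ∈ Set.Ioo (0 : ℝ) (1 / n),
      (1 + x) ^ n * (1 - n * Real.log x) ≤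
        n * (Real.log n + Real.log (Real.log n) + 5) := by
  have hn3 : (3:ℝ) ≤ n := by exact_mod_cast hn
  have hn0 : (0:ℝ) < n := by linarith
  have hL1 : 1 < Real.log n := by
    have h1 : Real.log 3 ≤ Real.log n := Real.log_le_log (by norm_num) hn3
    have h3 : 1 < Real.log 3 := by
      rw [show (1:ℝ) = Real.log (Real.exp 1) by simp]
      exact Real.log_lt_log (Real.exp_pos 1) (by nlinarith [Real.exp_one_lt_d9])
    linarith
  set L := Real.log n with hLdef
  have hL0 : (0:ℝ) < L := by linarith
  have part1 : ∀ x : ℝ, 0 < x → x < 1 / n →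
      0 < (1 + x) ^ n * (1 - n * Real.log x) := by
    intro x hx hx'
    have hx1 : x < 1 := by
      have : (1:ℝ)/n ≤ 1 := by rw [div_le_one hn0]; linarith
      linarith
    have hlog : Real.log x < 0 := Real.log_neg hx hx1
    have : (0:ℝ) < 1 - n * Real.log x := by nlinarith
    exact mul_pos (pow_pos (by linarith) n) this
  have hx0 : (0:ℝ) < 1 / (n * L) := by positivity
  have hlogx : Real.log (1 / (n * L)) = -(L + Real.log L) := by
    rw [one_div, Real.log_inv, Real.log_mul (ne_of_gt hn0) (ne_of_gt hL0)]
  have part2 : (1 + 1 / (n * L)) ^ n * (1 - n * Real.log (1 / (n * L))) ≤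
      Real.exp (1 / L) * (1 + n * L + n * Real.log L) := by
    have h2 : 1 - (n:ℝ) * Real.log (1 / (n * L)) = 1 + n * L + n * Real.log L := by
      rw [hlogx]; ring
    rw [h2]
    have hfac : (0:ℝ) ≤ 1 + n * L + n * Real.log L := by
      have := Real.log_pos hL1; positivity
    refine mul_le_mul_of_nonneg_right ?_ hfac
    have h3 : (1 + 1 / (n * L)) ^ n ≤ Real.exp (1 / (n * L)) ^ n :=
      pow_le_pow_left₀ (by positivity)
        (by linarith [Real.add_one_le_exp (1 / ((n:ℝ) * L))]) n
    calc (1 + 1 / (n * L)) ^ n ≤ Real.exp (1 / (n * L)) ^ n := h3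
      _ = Real.exp (n * (1 / (n * L))) := (Real.exp_nat_mul _ n).symm
      _ = Real.exp (1 / L) := by
          congr 1; field_simp
  refine ⟨part1, part2, 1 / (n * L), ⟨hx0, ?_⟩, ?_⟩
  · rw [div_lt_div_iff₀ (by positivity) hn0]
    nlinarith
  · exact part2.trans (key n hn)
end
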